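/- Let H be a real Hilbert space, let m ≥ 1, and for each i ∈ {1,…,m} let α_i ∈ (0,1), let T_i : H → H be α_i-averaged, and let (e_{i,n})_{n∈ℕ} be a sequence in H. Set α = m·max{α_1,…,α_m}/(1+(m−1)·max{α_1,…,α_m}), let (λ_n)_{n∈ℕ} be a sequence in (0, 1/α), suppose Fix(T_1∘⋯∘T_m) ≠ ∅, suppose Σ_{n∈ℕ} λ_n(1−αλ_n) = +∞ and Σ_{n∈ℕ} λ_n‖e_{i,n}‖ < +∞ for every i, let z_0 ∈ H and define z_{n+1} = z_n + λ_n( T_1(T_2(⋯T_{m−1}(T_m z_n + e_{m,n}) + e_{m−1,n}⋯) + e_{2,n}) + e_{1,n} − z_n ). Then Σ_{n∈ℕ} λ_n(1−αλ_n) ‖(T_1∘⋯∘T_m) z_n − z_n‖² < +∞. -/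

import Mathlib

open Filter Topology
open scoped RealInnerProductSpace

variable {H : Type*} [NormedAddCommGroup H] [InnerProductSpace ℝ H] [CompleteSpace H]

/-- `T` is nonexpansive. -/
def IsNonexpansiveOp (T : H → H) : Prop :=
  ∀ x y, ‖T x - T y‖ ≤ ‖x - y‖

/-- `T` is `α`-averaged: `T = (1 - α) • Id + α • R` for some nonexpansive `R`. -/
def IsAveragedOp (α : ℝ) (T : H → H) : Prop :=
  ∃ R : H → H, IsNonexpansiveOp R ∧ ∀ x, T x = (1 - α) • x + α • R x

/-- `z n` converges weakly to `w`. -/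
def WeakLim (z : ℕ → H) (w : H) : Prop :=
  ∀ y : H, Tendsto (fun n => ⟪z n, y⟫) atTop (nhds ⟪w, y⟫)

/-- `compFrom T i k = T i ∘ T (i+1) ∘ ⋯ ∘ T (i+k-1)`; in particular
`compFrom T 1 m = T 1 ∘ ⋯ ∘ T m` and `compFrom T i 0 = id`. -/
def compFrom (T : ℕ → H → H) : ℕ → ℕ → H → H
  | _, 0 => id
  | i, (k + 1) => T i ∘ compFrom T (i + 1) k

/-- Inexact composition with errors: `inexactFrom T e 1 m z =
T 1 (T 2 (⋯ T (m-1) (T m z + e m) + e (m-1) ⋯) + e 2) + e 1`. -/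
def inexactFrom (T : ℕ → H → H) (e : ℕ → H) : ℕ → ℕ → H → H
  | _, 0 => id
  | i, (k + 1) => fun z => T i (inexactFrom T e (i + 1) k z) + e i

/-!
An `α`-averaged operator `T` satisfies `κ ‖T x - T y‖² + ‖(x - T x) - (y - T y)‖² ≤ κ ‖x - y‖²`
with `κ = α / (1 - α)`, and these constants add up under composition (weighted triangle
inequality). Hence `Q = T₁ ∘ ⋯ ∘ Tₘ` satisfies it with `κ = m M / (1 - M)`, i.e. `Q` is
`α`-averaged for the `α = κ / (1 + κ)` of the statement. For a fixed point `x` of `Q`, the exact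
relaxed step `z + λ (Q z - z)` lowers `‖z - x‖²` by at least `λ (1 / α - λ) ‖Q z - z‖²`.
The errors move `‖zₙ - x‖` by a summable amount, so `‖zₙ - x‖` stays bounded and the decreases
telescope.
-/

section

variable {E : Type*} [NormedAddCommGroup E]

/-- For `κ > 0` this characterises the `κ / (1 + κ)`-averaged operators on a Hilbert space;
unlike the averagedness constant, `κ` is additive under composition. -/
def AveragedIneq (κ : ℝ) (T : E → E) : Prop :=
  ∀ x y, κ * ‖T x - T y‖ ^ 2 + ‖(x - T x) - (y - T y)‖ ^ 2 ≤ κ * ‖x - y‖ ^ 2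

namespace AveragedIneq

variable {κ κ' : ℝ} {T : E → E}

theorem isNonexpansiveOp (hκ : 0 < κ) (hT : AveragedIneq κ T) : IsNonexpansiveOp T := by
  intro x y
  have h := hT x y
  have : ‖T x - T y‖ ^ 2 ≤ ‖x - y‖ ^ 2 := by nlinarith [sq_nonneg ‖(x - T x) - (y - T y)‖]
  exact (pow_le_pow_iff_left₀ (norm_nonneg _) (norm_nonneg _) two_ne_zero).mp this

theorem mono (hκ : 0 < κ) (hκκ' : κ ≤ κ') (hT : AveragedIneq κ T) : AveragedIneq κ' T :=
  fun x y => by nlinarith [hT x y]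

end AveragedIneq

theorem norm_inexactFrom_sub_compFrom_le {T : ℕ → E → E} (e : ℕ → E) {i k : ℕ}
    (hT : ∀ j ∈ Finset.Ico i (i + k), IsNonexpansiveOp (T j)) (z : E) :
    ‖inexactFrom T e i k z - compFrom T i k z‖ ≤ ∑ j ∈ Finset.Ico i (i + k), ‖e j‖ := by
  induction k generalizing i with
  | zero => simp [inexactFrom, compFrom]
  | succ k ih =>
    have hIco : Finset.Ico i (i + (k + 1)) = insert i (Finset.Ico (i + 1) (i + 1 + k)) := by
      rw [show i + 1 + k = i + (k + 1) by omega, Finset.insert_Ico_add_one_left_eq_Ico (by omega)]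
    rw [hIco] at hT ⊢
    rw [Finset.sum_insert (by simp)]
    have ih' := ih (fun j hj => hT j (Finset.mem_insert_of_mem hj))
    have hTi := hT i (Finset.mem_insert_self _ _) (inexactFrom T e (i + 1) k z)
      (compFrom T (i + 1) k z)
    calc ‖T i (inexactFrom T e (i + 1) k z) + e i - T i (compFrom T (i + 1) k z)‖
        = ‖(T i (inexactFrom T e (i + 1) k z) - T i (compFrom T (i + 1) k z)) + e i‖ := by
          rw [add_sub_right_comm]
      _ ≤ ‖T i (inexactFrom T e (i + 1) k z) - T i (compFrom T (i + 1) k z)‖ + ‖e i‖ :=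
          norm_add_le _ _
      _ ≤ ‖e i‖ + ∑ j ∈ Finset.Ico (i + 1) (i + 1 + k), ‖e j‖ := by linarith

end

theorem summable_of_le_add_of_sq_add_le_sq {a b s ε : ℕ → ℝ} (ha : ∀ n, 0 ≤ a n)
    (hb : ∀ n, 0 ≤ b n) (hs : ∀ n, 0 ≤ s n) (hε : ∀ n, 0 ≤ ε n) (hεsum : Summable ε)
    (hab : ∀ n, a (n + 1) ≤ b n + ε n) (hba : ∀ n, b n ^ 2 + s n ≤ a n ^ 2) : Summable s := by
  set C := ∑' n, ε n
  have hεC : ∀ n, ε n ≤ C := fun n => hεsum.le_tsum n fun k _ => hε k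
  have hpartial : ∀ n, ∑ k ∈ Finset.range n, ε k ≤ C :=
    fun n => hεsum.sum_le_tsum _ fun k _ => hε k
  have hb_le : ∀ n, b n ≤ a n := fun n =>
    (pow_le_pow_iff_left₀ (hb n) (ha n) two_ne_zero).mp (by linarith [hba n, hs n])
  have hbound : ∀ n, a n ≤ a 0 + C := by
    have : ∀ n, a n ≤ a 0 + ∑ k ∈ Finset.range n, ε k := by
      intro n
      induction n with
      | zero => simp
      | succ n ih => rw [Finset.sum_range_succ]; linarith [hab n, hb_le n]
    exact fun n => (this n).trans (by linarith [hpartial n])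
  have hC : 0 ≤ C := by simpa using hpartial 0
  set K := 2 * (a 0 + C) + C with hK_def
  have hK : 0 ≤ K := by rw [hK_def]; linarith [ha 0]
  have hstep : ∀ n, a (n + 1) ^ 2 ≤ a n ^ 2 - s n + K * ε n := by
    intro n
    have hsq : a (n + 1) ^ 2 ≤ (b n + ε n) ^ 2 :=
      pow_le_pow_left₀ (ha _) (hab n) 2
    nlinarith [hba n, hb_le n, hbound n, hεC n, hε n, hb n]
  have htelescope : ∀ n, ∑ k ∈ Finset.range n, s k + a n ^ 2
      ≤ a 0 ^ 2 + K * ∑ k ∈ Finset.range n, ε k := by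
    intro n
    induction n with
    | zero => simp
    | succ n ih => rw [Finset.sum_range_succ, Finset.sum_range_succ]; nlinarith [hstep n]
  refine summable_of_sum_range_le (c := a 0 ^ 2 + K * C) hs fun n => ?_
  nlinarith [htelescope n, mul_le_mul_of_nonneg_left (hpartial n) hK, sq_nonneg (a n)]

section

variable {E : Type*} [NormedAddCommGroup E] [InnerProductSpace ℝ E]

theorem norm_sub_smul_add_smul_sq (a : ℝ) (u v : E) :
    ‖(1 - a) • u + a • v‖ ^ 2 = (1 - a) * ‖u‖ ^ 2 + a * ‖v‖ ^ 2 - a * (1 - a) * ‖u - v‖ ^ 2 := by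
  rw [norm_add_sq_real, norm_sub_sq_real, norm_smul, norm_smul, real_inner_smul_left,
    real_inner_smul_right, mul_pow, mul_pow, Real.norm_eq_abs, Real.norm_eq_abs, sq_abs, sq_abs]
  ring

theorem IsAveragedOp.mul_norm_sq_le {α : ℝ} {T : E → E} (hT : IsAveragedOp α T) (x y : E) :
    α * ‖T x - T y‖ ^ 2 + (1 - α) * ‖(x - T x) - (y - T y)‖ ^ 2 ≤ α * ‖x - y‖ ^ 2 := by
  obtain ⟨R, hR, hTR⟩ := hT
  have hRxy : ‖R x - R y‖ ^ 2 ≤ ‖x - y‖ ^ 2 := pow_le_pow_left₀ (norm_nonneg _) (hR x y) 2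
  have hTxy : T x - T y = (1 - α) • (x - y) + α • (R x - R y) := by rw [hTR, hTR]; module
  have hdxy : (x - T x) - (y - T y) = α • ((x - y) - (R x - R y)) := by rw [hTR, hTR]; module
  rw [hTxy, hdxy, norm_sub_smul_add_smul_sq, norm_smul, mul_pow, Real.norm_eq_abs, sq_abs]
  nlinarith [mul_le_mul_of_nonneg_left hRxy (sq_nonneg α)]

theorem IsAveragedOp.averagedIneq {α : ℝ} {T : E → E} (hα : α < 1) (hT : IsAveragedOp α T) :
    AveragedIneq (α / (1 - α)) T := by
  intro x y
  have h1α : 0 < 1 - α := by linarith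
  have h := hT.mul_norm_sq_le x y
  rw [← mul_le_mul_iff_right₀ h1α]
  field_simp
  linarith

theorem AveragedIneq.comp {κ κ' : ℝ} {S T : E → E} (hκ : 0 < κ) (hκ' : 0 < κ')
    (hS : AveragedIneq κ S) (hT : AveragedIneq κ' T) : AveragedIneq (κ + κ') (S ∘ T) := by
  intro x y
  have hT' := hT x y
  have hS' := hS (T x) (T y)
  set u := (x - T x) - (y - T y)
  set v := (T x - S (T x)) - (T y - S (T y))
  have huv : (x - (S ∘ T) x) - (y - (S ∘ T) y) = u + v := by
    simp only [Function.comp_apply, u, v]; abel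
  have hweighted : κ * κ' * ‖u + v‖ ^ 2 ≤ (κ + κ') * (κ * ‖u‖ ^ 2 + κ' * ‖v‖ ^ 2) := by
    have h0 := sq_nonneg ‖κ • u - κ' • v‖
    rw [norm_sub_sq_real, norm_smul, norm_smul, real_inner_smul_left, real_inner_smul_right,
      mul_pow, mul_pow, Real.norm_eq_abs, Real.norm_eq_abs, sq_abs, sq_abs] at h0
    rw [norm_add_sq_real]
    nlinarith
  rw [huv, Function.comp_apply, Function.comp_apply, ← mul_le_mul_iff_right₀ (mul_pos hκ hκ')]
  nlinarith [mul_le_mul_of_nonneg_left hT' hκ.le, mul_le_mul_of_nonneg_left hS' hκ'.le]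

theorem averagedIneq_compFrom {κ : ℝ} {T : ℕ → E → E} (hκ : 0 < κ) {i k : ℕ} (hk : 0 < k)
    (hT : ∀ j ∈ Finset.Ico i (i + k), AveragedIneq κ (T j)) :
    AveragedIneq (k * κ) (compFrom T i k) := by
  induction k, hk using Nat.le_induction generalizing i with
  | base => simpa [compFrom] using hT i (by simp)
  | succ k hk ih =>
    have hIco : Finset.Ico i (i + (k + 1)) = insert i (Finset.Ico (i + 1) (i + 1 + k)) := by
      rw [show i + 1 + k = i + (k + 1) by omega, Finset.insert_Ico_add_one_left_eq_Ico (by omega)]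
    rw [hIco] at hT
    have h := (hT i (Finset.mem_insert_self _ _)).comp hκ (by positivity)
      (ih fun j hj => hT j (Finset.mem_insert_of_mem hj))
    rw [show ((k + 1 : ℕ) : ℝ) * κ = κ + k * κ by push_cast; ring]
    exact h

namespace AveragedIneq

variable {κ : ℝ} {T : E → E} {x : E}

theorem inner_le (hT : AveragedIneq κ T) (hx : T x = x) (w : E) :
    2 * κ * ⟪w - x, T w - w⟫ ≤ -(1 + κ) * ‖T w - w‖ ^ 2 := by
  have h := hT w x
  rw [hx, sub_self, sub_zero, norm_sub_rev w,
    show T w - x = (w - x) + (T w - w) by abel, norm_add_sq_real] at h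
  linarith

theorem norm_relax_sub_sq_le (hκ : 0 < κ) (hT : AveragedIneq κ T) (hx : T x = x) {t : ℝ}
    (ht : 0 ≤ t) (w : E) :
    ‖w + t • (T w - w) - x‖ ^ 2 + t * ((1 + κ) / κ - t) * ‖T w - w‖ ^ 2 ≤ ‖w - x‖ ^ 2 := by
  rw [show w + t • (T w - w) - x = (w - x) + t • (T w - w) by abel, norm_add_sq_real,
    real_inner_smul_right, norm_smul, mul_pow, Real.norm_eq_abs, sq_abs,
    ← mul_le_mul_iff_right₀ hκ]
  have h := mul_le_mul_of_nonneg_left (hT.inner_le hx w) ht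
  field_simp
  nlinarith

theorem summable_residual_of_inexact_relaxation (hκ : 0 < κ) (hT : AveragedIneq κ T)
    (hx : T x = x) {t : ℕ → ℝ} (ht : ∀ n, t n ∈ Set.Icc 0 ((1 + κ) / κ)) {d z : ℕ → E}
    (hd : Summable fun n => t n * ‖d n‖) (hz : ∀ n, z (n + 1) = z n + t n • (T (z n) + d n - z n)) :
    Summable fun n => t n * ((1 + κ) / κ - t n) * ‖T (z n) - z n‖ ^ 2 := by
  refine summable_of_le_add_of_sq_add_le_sq (a := fun n => ‖z n - x‖)
    (b := fun n => ‖z n + t n • (T (z n) - z n) - x‖) (fun n => norm_nonneg _)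
    (fun n => norm_nonneg _) (fun n => ?_) (fun n => mul_nonneg (ht n).1 (norm_nonneg _)) hd
    (fun n => ?_) (fun n => hT.norm_relax_sub_sq_le hκ hx (ht n).1 (z n))
  · exact mul_nonneg (mul_nonneg (ht n).1 (sub_nonneg.2 (ht n).2)) (sq_nonneg _)
  · calc ‖z (n + 1) - x‖ = ‖(z n + t n • (T (z n) - z n) - x) + t n • d n‖ := by
          rw [hz n]; congr 1; module
      _ ≤ ‖z n + t n • (T (z n) - z n) - x‖ + t n * ‖d n‖ := by
          rw [← norm_smul_of_nonneg (ht n).1]; exact norm_add_le _ _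

end AveragedIneq

end

theorem statement1_general
    (m : ℕ) (hm : 1 ≤ m)
    (αi : ℕ → ℝ) (T : ℕ → H → H) (e : ℕ → ℕ → H)
    (hαi : ∀ i ∈ Finset.Icc 1 m, αi i ∈ Set.Ioo (0 : ℝ) 1)
    (hT : ∀ i ∈ Finset.Icc 1 m, IsAveragedOp (αi i) (T i))
    (M α : ℝ)
    (hM1 : ∀ i ∈ Finset.Icc 1 m, αi i ≤ M)
    (hM2 : ∃ i ∈ Finset.Icc 1 m, αi i = M)
    (hα : α = (m : ℝ) * M / (1 + ((m : ℝ) - 1) * M))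
    (lam : ℕ → ℝ) (hlam : ∀ n, lam n ∈ Set.Ioo (0 : ℝ) (1 / α))
    (hfix : ∃ x : H, compFrom T 1 m x = x)
    (herr : ∀ i ∈ Finset.Icc 1 m, Summable (fun n => lam n * ‖e i n‖))
    (z : ℕ → H)
    (hz : ∀ n, z (n + 1) = z n + lam n • (inexactFrom T (fun i => e i n) 1 m (z n) - z n)) :
    Summable (fun n => lam n * (1 - α * lam n) * ‖compFrom T 1 m (z n) - z n‖ ^ 2) := by
  obtain ⟨x, hx⟩ := hfix
  obtain ⟨hM0, hMlt⟩ : M ∈ Set.Ioo (0 : ℝ) 1 := by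
    obtain ⟨i₀, hi₀, rfl⟩ := hM2; exact hαi i₀ hi₀
  have hα0 : 0 < α := one_div_pos.mp ((hlam 0).1.trans (hlam 0).2)
  have hIco : Finset.Ico 1 (1 + m) = Finset.Icc 1 m := by
    rw [add_comm]; exact Finset.Ico_add_one_right_eq_Icc 1 m
  have hκ : 0 < M / (1 - M) := div_pos hM0 (sub_pos.2 hMlt)
  have hTκ : ∀ j ∈ Finset.Ico 1 (1 + m), AveragedIneq (M / (1 - M)) (T j) := by
    rw [hIco]; intro j hj
    obtain ⟨hj0, hj1⟩ := hαi j hj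
    exact ((hT j hj).averagedIneq hj1).mono (div_pos hj0 (sub_pos.2 hj1))
      (div_le_div₀ hM0.le (hM1 j hj) (sub_pos.2 hMlt) (by linarith [hM1 j hj]))
  have hQ := averagedIneq_compFrom hκ hm hTκ
  have hmκ : 0 < (m : ℝ) * (M / (1 - M)) := mul_pos (by exact_mod_cast hm) hκ
  have hinv : (1 + m * (M / (1 - M))) / (m * (M / (1 - M))) = 1 / α := by
    rw [hα]; field_simp; ring
  have herr' : Summable fun n =>
      lam n * ‖inexactFrom T (fun i => e i n) 1 m (z n) - compFrom T 1 m (z n)‖ := by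
    refine (summable_sum herr).of_nonneg_of_le (fun n => mul_nonneg (hlam n).1.le (norm_nonneg _))
      fun n => ?_
    rw [← Finset.mul_sum, ← hIco]
    exact mul_le_mul_of_nonneg_left (norm_inexactFrom_sub_compFrom_le _
      (fun j hj => (hTκ j hj).isNonexpansiveOp hκ) _) (hlam n).1.le
  have key := hQ.summable_residual_of_inexact_relaxation hmκ hx
    (fun n => hinv ▸ Set.Ioo_subset_Icc_self (hlam n)) herr' (z := z)
    fun n => by rw [hz n, add_sub_cancel]
  rw [hinv] at key
  refine (key.mul_left α).congr fun n => ?_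
  field_simp

theorem statement1
    (m : ℕ) (hm : 1 ≤ m)
    (αi : ℕ → ℝ) (T : ℕ → H → H) (e : ℕ → ℕ → H)
    (hαi : ∀ i ∈ Finset.Icc 1 m, αi i ∈ Set.Ioo (0 : ℝ) 1)
    (hT : ∀ i ∈ Finset.Icc 1 m, IsAveragedOp (αi i) (T i))
    (M α : ℝ)
    (hM1 : ∀ i ∈ Finset.Icc 1 m, αi i ≤ M)
    (hM2 : ∃ i ∈ Finset.Icc 1 m, αi i = M)
    (hα : α = (m : ℝ) * M / (1 + ((m : ℝ) - 1) * M))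
    (lam : ℕ → ℝ) (hlam : ∀ n, lam n ∈ Set.Ioo (0 : ℝ) (1 / α))
    (hfix : ∃ x : H, compFrom T 1 m x = x)
    (hdiv : ¬ Summable (fun n => lam n * (1 - α * lam n)))
    (herr : ∀ i ∈ Finset.Icc 1 m, Summable (fun n => lam n * ‖e i n‖))
    (z : ℕ → H)
    (hz : ∀ n, z (n + 1) = z n + lam n • (inexactFrom T (fun i => e i n) 1 m (z n) - z n)) :
    Summable (fun n => lam n * (1 - α * lam n) * ‖compFrom T 1 m (z n) - z n‖ ^ 2) :=
  statement1_general m hm αi T e hαi hT M α hM1 hM2 hα lam hlam hfix herr z hz
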